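/- arXiv:1302.7118 — 4 statements merged into one kernel-verified Lean document; each statement's English description precedes it below -/
import Mathlib

section
/- Let 0<a and 0<b<1 with 4a(1-a)<b^2, and set R=\sqrt{b^2-4a+4a^2}, w_+=(b+R)/(2b), w_-=(b-R)/(2b), t_+=(2-2a-b^2+bR)/(2(1-a)(1+b)), t_-=(2-2a-b^2-bR)/(2(1-a)(1+b)), and define F(a,b)= b[\ln(1-t_+)-\ln(1-t_-)] + (1-b)[\ln t_+ - \ln t_-] + a[\ln w_+ - \ln(1-w_+) - \ln w_- + \ln(1-w_-)] + b[\ln(1-(1-t_+)w_+) - \ln(1-(1-t_-)w_-)]. Suppose (a_j), (b_j), (\eta_j) are real sequences with a_j>0, b_j\in(0,1), b_j\to 0, a_j/b_j^2 \to 0, with 4a_j(1-a_j)<b_j^2 and all the quantities t_\pm, 1-t_\pm, w_\pm, 1-w_\pm, 1-(1-t_\pm)w_\pm formed from (a_j,b_j) positive, and suppose \eta_j < -4a_j satisfies 2a_j\ln((1-u_+)/u_+) - \sqrt{\eta_j^2+4a_j\eta_j} = F(a_j,b_j), where u_+ = (\eta_j+\sqrt{\eta_j^2+4a_j\eta_j})/(2\eta_j)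 \in (0,1/2). Then \eta_j/b_j^2 \to -1 as j\to\infty; that is, \eta = -b^2 + o(b^2). -/
open Real Filter

/-- `R = √(b² - 4a + 4a²)`. -/
noncomputable def Rq (a b : ℝ) : ℝ := Real.sqrt (b ^ 2 - 4 * a + 4 * a ^ 2)

/-- `w₊ = (b + R)/(2b)`. -/
noncomputable def wPlus (a b : ℝ) : ℝ := (b + Rq a b) / (2 * b)

/-- `w₋ = (b - R)/(2b)`. -/
noncomputable def wMinus (a b : ℝ) : ℝ := (b - Rq a b) / (2 * b)

/-- `t₊ = (2 - 2a - b² + bR)/(2(1-a)(1+b))`. -/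
noncomputable def tPlus (a b : ℝ) : ℝ :=
  (2 - 2 * a - b ^ 2 + b * Rq a b) / (2 * (1 - a) * (1 + b))

/-- `t₋ = (2 - 2a - b² - bR)/(2(1-a)(1+b))`. -/
noncomputable def tMinus (a b : ℝ) : ℝ :=
  (2 - 2 * a - b ^ 2 - b * Rq a b) / (2 * (1 - a) * (1 + b))

/-- The real value of `f(t₀(w₊), w₊) - f(t₀(w₋), w₋)`. -/
noncomputable def Fdiff (a b : ℝ) : ℝ :=
  b * (Real.log (1 - tPlus a b) - Real.log (1 - tMinus a b))
    + (1 - b) * (Real.log (tPlus a b) - Real.log (tMinus a b))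
    + a * (Real.log (wPlus a b) - Real.log (1 - wPlus a b)
        - Real.log (wMinus a b) + Real.log (1 - wMinus a b))
    + b * (Real.log (1 - (1 - tPlus a b) * wPlus a b)
        - Real.log (1 - (1 - tMinus a b) * wMinus a b))

/-!
Write `x = -η`, `s = √(x² - 4ax)` and `ε = a / b²`. Since `(1 - u₊) / u₊ = (x + s) / (x - s)`,
the equation for `η` says `s = 2a log((x + s) / (x - s)) - F`. As `x - 4a ≤ s < x` and
`0 ≤ log((x + s) / (x - s)) ≤ log(x / a)`, this traps `x` between `-F` and
`-F + 2a log(x / a) + 4a`; after dividing by `b²` and using `log y ≤ y - 1`, the logarithmic term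
costs only `O(ε log(1/ε))`. So it suffices that `F = -b² + o(b²)`.

Using `1 - w₊ = w₋` and factoring `1 - t_±` and `1 - (1 - t_±) w_±`, `F` collapses to
`2b log ρ + (1 - b) log τ + 2a log((b + R) / (b - R))` for explicit ratios `ρ`, `τ` with
`ρ - 1 ~ -b` and `τ - 1 ~ b²` because `R / b → 1`, while the last term is again
`O(ε log(1/ε)) b²`.
-/

open Topology

lemma log_div_sub_log_div {x y z : ℝ} (hx : x ≠ 0) (hy : y ≠ 0) (hz : z ≠ 0) :
    log (x / z) - log (y / z) = log (x / y) := by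
  rw [log_div hx hz, log_div hy hz, log_div hx hy]; ring

section CriticalPoints

variable {a b : ℝ}

lemma Rq_sq (hdisc : 4 * a * (1 - a) ≤ b ^ 2) : Rq a b ^ 2 = b ^ 2 - 4 * a + 4 * a ^ 2 :=
  sq_sqrt (by nlinarith)

lemma Rq_lt (ha : 0 < a) (ha1 : a < 1) (hb : 0 < b) : Rq a b < b :=
  (sqrt_lt' hb).2 (by nlinarith)

lemma Rq_div (hb : 0 < b) : Rq a b / b = √(1 - 4 * (a / b ^ 2) * (1 - a)) := by
  have : 1 - 4 * (a / b ^ 2) * (1 - a) = (b ^ 2 - 4 * a + 4 * a ^ 2) / b ^ 2 := by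
    field_simp; ring
  rw [this, sqrt_div' _ (sq_nonneg b), sqrt_sq hb.le, Rq]

lemma Fdiff_eq_log_ratios (ha : 0 < a) (hb : 0 < b) (hdisc : 4 * a * (1 - a) < b ^ 2)
    (hsmall : a + b ^ 2 < 1) :
    Fdiff a b = 2 * b * log ((2 - 2 * a + b - Rq a b) / (2 - 2 * a + b + Rq a b))
      + (1 - b) * log ((2 - 2 * a - b ^ 2 + b * Rq a b) / (2 - 2 * a - b ^ 2 - b * Rq a b))
      + 2 * a * log ((b + Rq a b) / (b - Rq a b)) := by
  have hR0 : 0 ≤ Rq a b := sqrt_nonneg _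
  have hRsq := Rq_sq hdisc.le
  have hRb := Rq_lt ha (by nlinarith) hb
  set R := Rq a b with hR
  have h1a : 1 - a ≠ 0 := by nlinarith
  have hA : 0 < 2 - 2 * a + b - R := by nlinarith
  have hB : 0 < 2 - 2 * a + b + R := by linarith
  have hQ : 0 < 2 - 2 * a - b ^ 2 - b * R := by nlinarith
  have hD : 2 * (1 - a) * (1 + b) ≠ 0 := by nlinarith
  have h1b : 2 * (1 + b) ≠ 0 := by positivity
  have h1tp : 1 - tPlus a b = b * (2 - 2 * a + b - R) / (2 * (1 - a) * (1 + b)) := by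
    rw [tPlus, ← hR]; field_simp; ring
  have h1tm : 1 - tMinus a b = b * (2 - 2 * a + b + R) / (2 * (1 - a) * (1 + b)) := by
    rw [tMinus, ← hR]; field_simp; ring
  have hzp : 1 - (1 - tPlus a b) * wPlus a b = (2 - 2 * a + b - R) / (2 * (1 + b)) := by
    rw [h1tp, wPlus, ← hR]; field_simp; linear_combination hRsq
  have hzm : 1 - (1 - tMinus a b) * wMinus a b = (2 - 2 * a + b + R) / (2 * (1 + b)) := by
    rw [h1tm, wMinus, ← hR]; field_simp; linear_combination hRsq
  have h1wp : 1 - wPlus a b = wMinus a b := by rw [wPlus, wMinus, ← hR]; field_simp; ring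
  have h1wm : 1 - wMinus a b = wPlus a b := by rw [wPlus, wMinus, ← hR]; field_simp; ring
  rw [Fdiff, hzp, hzm, h1tp, h1tm, h1wp, h1wm]
  simp only [tPlus, tMinus, wPlus, wMinus, ← hR]
  rw [log_div_sub_log_div (mul_pos hb hA).ne' (mul_pos hb hB).ne' hD, mul_div_mul_left _ _ hb.ne',
    log_div_sub_log_div hA.ne' hB.ne' h1b,
    log_div_sub_log_div (by nlinarith) hQ.ne' hD]
  have := log_div_sub_log_div (x := b + R) (y := b - R) (z := 2 * b) (by positivity)
    (by linarith) (by positivity)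
  linear_combination 2 * a * this

lemma log_Rq_ratio_mem_Icc (ha : 0 < a) (ha2 : a ≤ 1 / 2) (hb : 0 < b)
    (hdisc : 4 * a * (1 - a) < b ^ 2) :
    log ((b + Rq a b) / (b - Rq a b)) ∈ Set.Icc 0 (log (2 / (a / b ^ 2))) := by
  have hR0 : 0 ≤ Rq a b := sqrt_nonneg _
  have hRsq := Rq_sq hdisc.le
  have hRb := Rq_lt ha (by linarith) hb
  have hsub : 0 < b - Rq a b := by linarith
  constructor
  · exact log_nonneg ((one_le_div hsub).2 (by linarith))
  · refine log_le_log (by positivity) ?_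
    rw [div_div_eq_mul_div, div_le_div_iff₀ hsub ha]
    calc (b + Rq a b) * a ≤ b * (4 * a * (1 - a)) := by
          nlinarith [mul_le_mul_of_nonneg_left hRb.le ha.le,
            mul_nonneg (mul_pos ha hb).le (by linarith : (0 : ℝ) ≤ 1 - 2 * a)]
      _ = b * (b + Rq a b) * (b - Rq a b) := by linear_combination b * hRsq
      _ ≤ 2 * b ^ 2 * (b - Rq a b) := by
          nlinarith [mul_nonneg (mul_nonneg hb.le hsub.le) hsub.le]

end CriticalPoints

lemma neg_mem_Icc_of_saddle_eq {a η F : ℝ} (ha : 0 < a) (hη : η < -4 * a)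
    (heq : 2 * a * log ((1 - (η + √(η ^ 2 + 4 * a * η)) / (2 * η)) /
        ((η + √(η ^ 2 + 4 * a * η)) / (2 * η))) - √(η ^ 2 + 4 * a * η) = F) :
    -η ∈ Set.Icc (-F) (-F + 2 * a * log (-η / a) + 4 * a) := by
  set s := √(η ^ 2 + 4 * a * η)
  have hsq : s ^ 2 = η ^ 2 + 4 * a * η := sq_sqrt (by nlinarith)
  have hs0 : 0 < s := sqrt_pos.2 (by nlinarith)
  have hsη : s < -η := by nlinarith
  have hgap : -η - s ≤ 4 * a := by nlinarith
  have hratio : (1 - (η + s) / (2 * η)) / ((η + s) / (2 * η)) = (-η + s) / (-η - s) := by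
    have : η ≠ 0 := by linarith
    have : η + s ≠ 0 := by linarith
    have : -η - s ≠ 0 := by linarith
    field_simp
    ring
  have hL0 : 0 ≤ log ((-η + s) / (-η - s)) :=
    log_nonneg ((one_le_div (by linarith)).2 (by linarith))
  have hL : log ((-η + s) / (-η - s)) ≤ log (-η / a) := by
    refine log_le_log (div_pos (by linarith) (by linarith)) ?_
    rw [div_le_div_iff₀ (by linarith) ha]
    nlinarith
  rw [hratio] at heq
  constructor
  · nlinarith [mul_nonneg ha.le hL0]
  · nlinarith [mul_le_mul_of_nonneg_left hL ha.le]

section Asymptotics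

variable {ι : Type*} {l : Filter ι} {a b R : ι → ℝ}

lemma tendsto_mul_log_const_div {ε : ι → ℝ} {C : ℝ} (hC : C ≠ 0)
    (hε : Tendsto ε l (𝓝 0)) : Tendsto (fun j => ε j * log (C / ε j)) l (𝓝 0) := by
  have hcont : Continuous fun x : ℝ => x * log C - x * log x :=
    (continuous_id.mul continuous_const).sub continuous_mul_log
  have hform : (fun x : ℝ => x * log (C / x)) = fun x => x * log C - x * log x := by
    funext x
    rcases eq_or_ne x 0 with rfl | hx
    · simp
    · rw [log_div hC hx]; ring
  have h := (hcont.tendsto 0).comp hε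
  rw [← hform] at h
  simpa [Function.comp_def] using h

lemma tendsto_log_div_of_tendsto_sub_one_div {ρ c : ι → ℝ} {ℓ : ℝ}
    (hρ : Tendsto ρ l (𝓝 1)) (h : Tendsto (fun j => (ρ j - 1) / c j) l (𝓝 ℓ)) :
    Tendsto (fun j => log (ρ j) / c j) l (𝓝 ℓ) := by
  have hslope : Tendsto (fun j => dslope log 1 (ρ j)) l (𝓝 1) := by
    have := (continuousAt_dslope_same.2 (differentiableAt_log one_ne_zero)).tendsto.comp hρ
    simpa [dslope_same, Function.comp_def] using this
  refine (one_mul ℓ ▸ hslope.mul h).congr fun j => ?_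
  rw [← mul_div_assoc, mul_comm, ← smul_eq_mul, sub_smul_dslope, log_one, sub_zero]

lemma tendsto_of_le_add_mul_log {y m ε : ι → ℝ}
    (hy : ∀ j, 0 < y j) (hε : ∀ j, 0 < ε j) (hm : Tendsto m l (𝓝 1))
    (hε0 : Tendsto ε l (𝓝 0)) (hlow : ∀ j, m j ≤ y j)
    (hup : ∀ j, y j ≤ m j + 2 * ε j * log (y j / ε j) + 4 * ε j) :
    Tendsto y l (𝓝 1) := by
  have hlin : ∀ j, y j * (1 - 2 * ε j) ≤ m j + 2 * ε j + 2 * (ε j * log (1 / ε j)) := by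
    intro j
    have hsplit : log (y j / ε j) = log (y j) + log (1 / ε j) := by
      rw [← log_mul (hy j).ne' (one_div_pos.2 (hε j)).ne', mul_one_div]
    have hlog := mul_le_mul_of_nonneg_left (log_le_sub_one_of_pos (hy j)) (hε j).le
    have h := hup j
    rw [hsplit] at h
    linarith
  have hbound := ((hm.add (hε0.const_mul 2)).add
    ((tendsto_mul_log_const_div one_ne_zero hε0).const_mul 2)).div
    ((hε0.const_mul 2).const_sub 1) (by norm_num)
  rw [show (1 + 2 * 0 + 2 * 0) / (1 - 2 * 0) = (1 : ℝ) by norm_num] at hbound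
  refine tendsto_of_tendsto_of_tendsto_of_le_of_le' hm hbound (.of_forall hlow) ?_
  filter_upwards [hε0.eventually (gt_mem_nhds (by norm_num : (0 : ℝ) < 1 / 2))] with j hj
  exact (le_div_iff₀ (by linarith)).2 (hlin j)

lemma tendsto_log_ratio_div (hb : ∀ j, b j ≠ 0) (ha0 : Tendsto a l (𝓝 0))
    (hb0 : Tendsto b l (𝓝 0)) (hr : Tendsto (fun j => R j / b j) l (𝓝 1)) :
    Tendsto (fun j => log ((2 - 2 * a j + b j - R j) / (2 - 2 * a j + b j + R j)) / b j)
      l (𝓝 (-1)) := by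
  have hR0 : Tendsto R l (𝓝 0) := by
    simpa using (hb0.mul hr).congr fun j => mul_div_cancel₀ (R j) (hb j)
  have hden : Tendsto (fun j => 2 - 2 * a j + b j + R j) l (𝓝 2) := by
    simpa using (((ha0.const_mul 2).const_sub 2).add hb0).add hR0
  have hnum : Tendsto (fun j => 2 - 2 * a j + b j - R j) l (𝓝 2) := by
    simpa using (((ha0.const_mul 2).const_sub 2).add hb0).sub hR0
  have hratio := hnum.div hden two_ne_zero
  rw [div_self two_ne_zero] at hratio
  refine tendsto_log_div_of_tendsto_sub_one_div hratio ?_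
  have hlim : Tendsto (fun j => -2 * (R j / b j) / (2 - 2 * a j + b j + R j)) l (𝓝 (-1)) := by
    have := (hr.const_mul (-2)).div hden two_ne_zero
    rwa [show (-2 : ℝ) * 1 / 2 = -1 by norm_num] at this
  refine hlim.congr' ?_
  filter_upwards [hden.eventually_ne two_ne_zero] with j hj
  have := hb j
  rw [div_sub_one hj]
  field_simp
  ring

lemma tendsto_log_ratio_div_sq (hb : ∀ j, b j ≠ 0) (ha0 : Tendsto a l (𝓝 0))
    (hb0 : Tendsto b l (𝓝 0)) (hr : Tendsto (fun j => R j / b j) l (𝓝 1)) :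
    Tendsto (fun j => log ((2 - 2 * a j - b j ^ 2 + b j * R j) /
      (2 - 2 * a j - b j ^ 2 - b j * R j)) / b j ^ 2) l (𝓝 1) := by
  have hR0 : Tendsto R l (𝓝 0) := by
    simpa using (hb0.mul hr).congr fun j => mul_div_cancel₀ (R j) (hb j)
  have hden : Tendsto (fun j => 2 - 2 * a j - b j ^ 2 - b j * R j) l (𝓝 2) := by
    simpa using (((ha0.const_mul 2).const_sub 2).sub (hb0.pow 2)).sub (hb0.mul hR0)
  have hnum : Tendsto (fun j => 2 - 2 * a j - b j ^ 2 + b j * R j) l (𝓝 2) := by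
    simpa using (((ha0.const_mul 2).const_sub 2).sub (hb0.pow 2)).add (hb0.mul hR0)
  have hratio := hnum.div hden two_ne_zero
  rw [div_self two_ne_zero] at hratio
  refine tendsto_log_div_of_tendsto_sub_one_div hratio ?_
  have hlim : Tendsto (fun j => 2 * (R j / b j) / (2 - 2 * a j - b j ^ 2 - b j * R j))
      l (𝓝 1) := by
    have := (hr.const_mul 2).div hden two_ne_zero
    rwa [show (2 : ℝ) * 1 / 2 = 1 by norm_num] at this
  refine hlim.congr' ?_
  filter_upwards [hden.eventually_ne two_ne_zero] with j hj
  have := hb j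
  rw [div_sub_one hj]
  field_simp
  ring

lemma tendsto_Rq_div (hb : ∀ j, 0 < b j) (ha0 : Tendsto a l (𝓝 0))
    (hab : Tendsto (fun j => a j / b j ^ 2) l (𝓝 0)) :
    Tendsto (fun j => Rq (a j) (b j) / b j) l (𝓝 1) := by
  have hlim := (((hab.const_mul 4).mul (ha0.const_sub 1)).const_sub 1).sqrt
  rw [mul_zero, zero_mul, sub_zero, sqrt_one] at hlim
  exact hlim.congr fun j => (Rq_div (hb j)).symm

lemma tendsto_mul_log_Rq_ratio (ha : ∀ j, 0 < a j) (hb : ∀ j, 0 < b j)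
    (hab : Tendsto (fun j => a j / b j ^ 2) l (𝓝 0))
    (hsmall : ∀ᶠ j in l, a j ≤ 1 / 2 ∧ 4 * a j * (1 - a j) < b j ^ 2) :
    Tendsto (fun j => a j / b j ^ 2 * log ((b j + Rq (a j) (b j)) / (b j - Rq (a j) (b j))))
      l (𝓝 0) := by
  refine tendsto_of_tendsto_of_tendsto_of_le_of_le' tendsto_const_nhds
    (tendsto_mul_log_const_div two_ne_zero hab) ?_ ?_
  all_goals
    filter_upwards [hsmall] with j ⟨ha2, hdisc⟩
    have hε : 0 ≤ a j / b j ^ 2 := (div_pos (ha j) (pow_pos (hb j) 2)).le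
    have hlog := log_Rq_ratio_mem_Icc (ha j) ha2 (hb j) hdisc
  · exact mul_nonneg hε hlog.1
  · exact mul_le_mul_of_nonneg_left hlog.2 hε

theorem tendsto_Fdiff_div_sq (ha : ∀ j, 0 < a j) (hb : ∀ j, 0 < b j)
    (hb0 : Tendsto b l (𝓝 0)) (hab : Tendsto (fun j => a j / b j ^ 2) l (𝓝 0)) :
    Tendsto (fun j => Fdiff (a j) (b j) / b j ^ 2) l (𝓝 (-1)) := by
  have ha0 : Tendsto a l (𝓝 0) := by
    simpa using (hab.mul (hb0.pow 2)).congr fun j =>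
      div_mul_cancel₀ (a j) (pow_pos (hb j) 2).ne'
  have hsmall : ∀ᶠ j in l, a j ≤ 1 / 2 ∧ a j + b j ^ 2 < 1 ∧ 4 * a j * (1 - a j) < b j ^ 2 := by
    filter_upwards [hab.eventually (gt_mem_nhds (by norm_num : (0 : ℝ) < 1 / 8)),
      hb0.eventually (gt_mem_nhds (by norm_num : (0 : ℝ) < 1 / 2))] with j hε hbj
    have := ha j
    have := hb j
    have : 8 * a j < b j ^ 2 := by rw [div_lt_iff₀ (by positivity)] at hε; linarith
    exact ⟨by nlinarith, by nlinarith, by nlinarith⟩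
  have hr := tendsto_Rq_div hb ha0 hab
  have hρ := tendsto_log_ratio_div (fun j => (hb j).ne') ha0 hb0 hr
  have hτ := tendsto_log_ratio_div_sq (fun j => (hb j).ne') ha0 hb0 hr
  have hw := tendsto_mul_log_Rq_ratio ha hb hab (hsmall.mono fun j h => ⟨h.1, h.2.2⟩)
  have hsum := ((hρ.const_mul 2).add ((hb0.const_sub 1).mul hτ)).add (hw.const_mul 2)
  rw [show 2 * -1 + (1 - 0) * 1 + 2 * 0 = (-1 : ℝ) by norm_num] at hsum
  refine hsum.congr' ?_
  filter_upwards [hsmall] with j ⟨_, hab1, hdisc⟩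
  rw [Fdiff_eq_log_ratios (ha j) (hb j) hdisc hab1]
  have := (hb j).ne'
  field_simp

end Asymptotics

theorem eta_asymptotics_general (a b η : ℕ → ℝ)
    (ha : ∀ j, 0 < a j)
    (hb : ∀ j, 0 < b j ∧ b j < 1)
    (hb0 : Tendsto b atTop (nhds 0))
    (hab : Tendsto (fun j => a j / (b j) ^ 2) atTop (nhds 0))
    (hη : ∀ j, η j < -4 * a j)
    (heq : ∀ j,
      2 * a j *
          Real.log ((1 - (η j + Real.sqrt ((η j) ^ 2 + 4 * a j * η j)) / (2 * η j)) /
            ((η j + Real.sqrt ((η j) ^ 2 + 4 * a j * η j)) / (2 * η j)))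
        - Real.sqrt ((η j) ^ 2 + 4 * a j * η j) = Fdiff (a j) (b j)) :
    Tendsto (fun j => η j / (b j) ^ 2) atTop (nhds (-1)) := by
  have hb2 : ∀ j, 0 < b j ^ 2 := fun j => pow_pos (hb j).1 2
  have hF : Tendsto (fun j => -Fdiff (a j) (b j) / b j ^ 2) atTop (𝓝 1) := by
    simpa [neg_div] using (tendsto_Fdiff_div_sq ha (fun j => (hb j).1) hb0 hab).neg
  have hbounds := fun j => neg_mem_Icc_of_saddle_eq (ha j) (hη j) (heq j)
  have hy : Tendsto (fun j => -η j / b j ^ 2) atTop (𝓝 1) := by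
    refine tendsto_of_le_add_mul_log (fun j => div_pos (by linarith [hη j, ha j]) (hb2 j))
      (fun j => div_pos (ha j) (hb2 j)) hF hab
      (fun j => div_le_div_of_nonneg_right (hbounds j).1 (hb2 j).le) fun j => ?_
    calc -η j / b j ^ 2
        ≤ (-Fdiff (a j) (b j) + 2 * a j * log (-η j / a j) + 4 * a j) / b j ^ 2 :=
          div_le_div_of_nonneg_right (hbounds j).2 (hb2 j).le
      _ = _ := by rw [div_div_div_cancel_right₀ (hb2 j).ne']; ring
  simpa [neg_div] using hy.neg

/-- Lemma 1 of the paper: under the stated conditions, `η = -b² + o(b²)`,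
i.e. `η_j / b_j² → -1`. -/
theorem eta_asymptotics (a b η : ℕ → ℝ)
    (ha : ∀ j, 0 < a j)
    (hb : ∀ j, 0 < b j ∧ b j < 1)
    (hb0 : Tendsto b atTop (nhds 0))
    (hab : Tendsto (fun j => a j / (b j) ^ 2) atTop (nhds 0))
    (hdisc : ∀ j, 4 * a j * (1 - a j) < (b j) ^ 2)
    (hpos : ∀ j,
      0 < tPlus (a j) (b j) ∧ 0 < 1 - tPlus (a j) (b j) ∧
      0 < tMinus (a j) (b j) ∧ 0 < 1 - tMinus (a j) (b j) ∧
      0 < wPlus (a j) (b j) ∧ 0 < 1 - wPlus (a j) (b j) ∧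
      0 < wMinus (a j) (b j) ∧ 0 < 1 - wMinus (a j) (b j) ∧
      0 < 1 - (1 - tPlus (a j) (b j)) * wPlus (a j) (b j) ∧
      0 < 1 - (1 - tMinus (a j) (b j)) * wMinus (a j) (b j))
    (hη : ∀ j, η j < -4 * a j)
    (heq : ∀ j,
      2 * a j *
          Real.log ((1 - (η j + Real.sqrt ((η j) ^ 2 + 4 * a j * η j)) / (2 * η j)) /
            ((η j + Real.sqrt ((η j) ^ 2 + 4 * a j * η j)) / (2 * η j)))
        - Real.sqrt ((η j) ^ 2 + 4 * a j * η j) = Fdiff (a j) (b j)) :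
    Tendsto (fun j => η j / (b j) ^ 2) atTop (nhds (-1)) :=
  eta_asymptotics_general a b η ha hb hb0 hab hη heq
end

section
/- Let a,b,S be complex numbers with S^2 = b^2 - 4a + 4a^2, a\ne 1, b\ne 0, b\ne -1, and set w = (b+S)/(2b) and t = (2-2a-b^2+bS)/(2(1-a)(1+b)). Assume t\ne 0, t\ne 1, w\ne 0, w\ne 1, and 1-(1-t)w\ne 0. Then both -b/(1-t) + (1-b)/t + b\,w/(1-(1-t)w) = 0 and a/w - a/(w-1) - b(1-t)/(1-(1-t)w) = 0. (Replacing S by -S gives the same conclusion for the other pair (t_-,w_-).) -/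
/-!
`w` is a root of `b²w² - b²w - a(a-1)`, whose discriminant is `b²S²`, and `t` is affine in `w`:
`(1-a)(1+b)t = 1 - a + b²(w-1)`. Modulo these two relations both `1 - t` and `1 - (1-t)w` are
multiples of `q = 1 + b - a - bw`, so each partial derivative becomes a rational function of `w`
alone, which vanishes because `w` is a root of the quadratic.
-/

variable {K : Type*} [Field K] {a b S w t : K}

theorem sq_mul_mul_sub_one_of_eq_div (h2 : (2 : K) ≠ 0) (hb : b ≠ 0)
    (hS : S ^ 2 = b ^ 2 - 4 * a + 4 * a ^ 2) (hw : w = (b + S) / (2 * b)) :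
    b ^ 2 * w * (w - 1) = a * (a - 1) := by
  subst hw
  field_simp
  linear_combination hS

theorem one_sub_mul_one_add_mul_of_eq_div (h2 : (2 : K) ≠ 0) (hb : b ≠ 0) (ha : 1 - a ≠ 0)
    (hb1 : 1 + b ≠ 0) (hw : w = (b + S) / (2 * b))
    (ht : t = (2 - 2 * a - b ^ 2 + b * S) / (2 * (1 - a) * (1 + b))) :
    (1 - a) * (1 + b) * t = 1 - a + b ^ 2 * (w - 1) := by
  subst hw ht
  field_simp
  ring

section Relations

variable (hw : b ^ 2 * w * (w - 1) = a * (a - 1))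
  (ht : (1 - a) * (1 + b) * t = 1 - a + b ^ 2 * (w - 1))

include ht in
theorem one_sub_mul_one_add_mul_one_sub :
    (1 - a) * (1 + b) * (1 - t) = b * (1 + b - a - b * w) := by
  linear_combination -ht

include hw ht in
theorem one_add_mul_one_sub_one_sub_mul (ha : 1 - a ≠ 0) :
    (1 + b) * (1 - (1 - t) * w) = 1 + b - a - b * w := by
  apply mul_left_cancel₀ ha
  linear_combination w * ht + hw

include hw in
theorem one_sub_mul_one_sub_mul_eq_mul :
    (1 - b) * (1 - a) * (1 + b - a - b * w) = (1 - a + b ^ 2 * (w - 1)) * (1 - a - b * w) := by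
  linear_combination b * hw

include hw ht in
theorem partial_t_eq_zero (ha : 1 - a ≠ 0) (hb : 1 + b ≠ 0) (ht0 : t ≠ 0) (ht1 : t ≠ 1)
    (hq : 1 - (1 - t) * w ≠ 0) :
    -b / (1 - t) + (1 - b) / t + b * w / (1 - (1 - t) * w) = 0 := by
  have h1t : 1 - t ≠ 0 := sub_ne_zero.mpr ht1.symm
  have hq' : 1 + b - a - b * w ≠ 0 := by
    rw [← one_add_mul_one_sub_one_sub_mul hw ht ha]
    exact mul_ne_zero hb hq
  have hr : 1 - a + b ^ 2 * (w - 1) ≠ 0 := by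
    rw [← ht]
    exact mul_ne_zero (mul_ne_zero ha hb) ht0
  have e1 : -b / (1 - t) = -((1 - a) * (1 + b)) / (1 + b - a - b * w) := by
    rw [div_eq_div_iff h1t hq']
    linear_combination one_sub_mul_one_add_mul_one_sub ht
  have e2 : (1 - b) / t = (1 - b) * ((1 - a) * (1 + b)) / (1 - a + b ^ 2 * (w - 1)) := by
    rw [div_eq_div_iff ht0 hr]
    linear_combination (b - 1) * ht
  have e3 : b * w / (1 - (1 - t) * w) = b * w * (1 + b) / (1 + b - a - b * w) := by
    rw [div_eq_div_iff hq hq']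
    linear_combination -b * w * one_add_mul_one_sub_one_sub_mul hw ht ha
  rw [e1, e2, e3]
  field_simp
  linear_combination (1 + b) * one_sub_mul_one_sub_mul_eq_mul hw

include hw ht in
theorem partial_w_eq_zero (ha : 1 - a ≠ 0) (hb : 1 + b ≠ 0) (hw0 : w ≠ 0) (hw1 : w ≠ 1)
    (hq : 1 - (1 - t) * w ≠ 0) :
    a / w - a / (w - 1) - b * (1 - t) / (1 - (1 - t) * w) = 0 := by
  have hw1' : w - 1 ≠ 0 := sub_ne_zero.mpr hw1
  have e : b * (1 - t) / (1 - (1 - t) * w) = b ^ 2 / (1 - a) := by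
    rw [div_eq_div_iff hq ha]
    apply mul_left_cancel₀ hb
    linear_combination b * one_sub_mul_one_add_mul_one_sub ht -
      b ^ 2 * one_add_mul_one_sub_one_sub_mul hw ht ha
  rw [e]
  field_simp
  linear_combination -hw

end Relations

/-- `(t₊, w₊)` with `w₊ = (b+S)/(2b)`, `t₊ = (2-2a-b²+bS)/(2(1-a)(1+b))`,
`S² = b² - 4a + 4a²`, is a critical point of the phase function
`f(t,w) = b ln(1-t) + (1-b) ln t + a ln w - a ln(w-1) + b ln[1-(1-t)w]`. -/
theorem critical_point (a b S : ℂ) (hS : S ^ 2 = b ^ 2 - 4 * a + 4 * a ^ 2)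
    (ha : a ≠ 1) (hb0 : b ≠ 0) (hb1 : b ≠ -1)
    (w t : ℂ) (hw : w = (b + S) / (2 * b))
    (ht : t = (2 - 2 * a - b ^ 2 + b * S) / (2 * (1 - a) * (1 + b)))
    (ht0 : t ≠ 0) (ht1 : t ≠ 1) (hw0 : w ≠ 0) (hw1 : w ≠ 1)
    (hq : 1 - (1 - t) * w ≠ 0) :
    -b / (1 - t) + (1 - b) / t + b * w / (1 - (1 - t) * w) = 0 ∧
    a / w - a / (w - 1) - b * (1 - t) / (1 - (1 - t) * w) = 0 := by
  have ha' : 1 - a ≠ 0 := sub_ne_zero.mpr ha.symm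
  have hb1' : 1 + b ≠ 0 := fun h => hb1 (by linear_combination h)
  have hwq := sq_mul_mul_sub_one_of_eq_div two_ne_zero hb0 hS hw
  have htw := one_sub_mul_one_add_mul_of_eq_div two_ne_zero hb0 ha' hb1' hw ht
  exact ⟨partial_t_eq_zero hwq htw ha' hb1' ht0 ht1 hq,
    partial_w_eq_zero hwq htw ha' hb1' hw0 hw1 hq⟩
end

section
/- For a real parameter m\ne 0, define functions Q_p(u,w) for complex u\in\mathbb{C}\setminus\{0,i,-i\} and w\ne u recursively by Q_0(u,w)=1/(u-w) and Q_{p+1}(u,w) = \frac{1}{m}\Big(1+\frac{1}{u^2}\Big)^{-1}\Big(\frac{Q_p(u,w)}{u} + \frac{\partial}{\partial u}Q_p(u,w)\Big). Then for every p\ge 1 there exist constants q_{p,i,j} (0\le i\le p-1, 0\le j\le \min over the stated range, namely 0\le j\le p-i), independent of m, u and w, such that Q_p(u,w) = \frac{1}{(2m)^p}\sum_{i=0}^{p-1}\sum_{j=0}^{p-i} q_{p,i,j}\,\Big(\frac{1}{1+u^2}\Big)^{p+i} u^{2p+i-j}\Big(\frac{1}{u-w}\Big)^{p+1-i-j} for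 all u\in\mathbb{C}\setminus\{0,i,-i\} and all w\ne u. -/
/-!
Write `Q_p = (2m)^{-p} R_p`; then `R_0 = 1/(u-w)` and `R_{p+1} = 2 (1 + 1/u²)⁻¹ (R_p/u + ∂_u R_p)`
no longer involve `m`. With `A = 1/(1+u²)` and `C = 1/(u-w)`, this operator sends `A^a u^b C^c` to
`2((b+1) A^{a+1} u^{b+1} C^c - 2a A^{a+2} u^{b+3} C^c - c A^{a+1} u^{b+2} C^{c+1})`.
For `(a, b, c) = (p+i, 2p+i-j, p+1-i-j)` these are the terms of index `(i, j+1)`, `(i+1, j)` and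
`(i, j)` of level `p+1`, so by linearity the operator maps combinations of the terms indexed by the
triangle `i < p, j ≤ p-i` to combinations of those indexed by the next triangle.
-/

/-- The functions `Q_p(u,w)` of equation (101) of the paper. -/
noncomputable def Qfun (m : ℝ) : ℕ → ℂ → ℂ → ℂ
  | 0 => fun u w => 1 / (u - w)
  | p + 1 => fun u w =>
      (1 / (m : ℂ)) * (1 + 1 / u ^ 2)⁻¹ *
        (Qfun m p u w / u + deriv (fun z => Qfun m p z w) u)

open Finset Filter Topology

theorem HasDerivAt.one_div_pow {𝕜 : Type*} [NontriviallyNormedField 𝕜] {f : 𝕜 → 𝕜} {f' x : 𝕜}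
    (hf : HasDerivAt f f' x) (hx : f x ≠ 0) (n : ℕ) :
    HasDerivAt (fun z => (1 / f z) ^ n) (-(n * f' * (1 / f x) ^ (n + 1))) x := by
  simp only [one_div]
  refine ((hf.inv hx).fun_pow n).congr_deriv ?_
  rcases n with _ | n
  · simp
  · simp only [Pi.inv_apply, Nat.add_sub_cancel, inv_pow]
    field_simp
    ring

namespace Qfun

def Regular (u w : ℂ) : Prop := u ≠ 0 ∧ u ≠ Complex.I ∧ u ≠ -Complex.I ∧ w ≠ u

theorem Regular.one_add_sq_ne_zero {u w : ℂ} (h : Regular u w) : 1 + u ^ 2 ≠ 0 := by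
  intro h0
  have : (u - Complex.I) * (u + Complex.I) = 0 := by linear_combination h0 - Complex.I_sq
  rcases mul_eq_zero.mp this with h' | h'
  · exact h.2.1 (sub_eq_zero.mp h')
  · exact h.2.2.1 (eq_neg_of_add_eq_zero_left h')

theorem Regular.sub_ne_zero {u w : ℂ} (h : Regular u w) : u - w ≠ 0 :=
  _root_.sub_ne_zero.mpr h.2.2.2.symm

theorem Regular.eventually {u w : ℂ} (h : Regular u w) : ∀ᶠ z in 𝓝 u, Regular z w :=
  (eventually_ne_nhds h.1).and <| (eventually_ne_nhds h.2.1).and <|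
    (eventually_ne_nhds h.2.2.1).and <| (eventually_ne_nhds h.2.2.2.symm).mono fun _ => Ne.symm

noncomputable def monomial (a b c : ℕ) (u w : ℂ) : ℂ :=
  (1 / (1 + u ^ 2)) ^ a * u ^ b * (1 / (u - w)) ^ c

theorem hasDerivAt_monomial (a b c : ℕ) {u w : ℂ} (h : Regular u w) :
    HasDerivAt (fun z => monomial a b c z w)
      ((b * monomial a b c u w - 2 * a * monomial (a + 1) (b + 2) c u w
        - c * monomial a (b + 1) (c + 1) u w) / u) u := by
  have hA := (((hasDerivAt_pow 2 u).const_add 1).one_div_pow h.one_add_sq_ne_zero a)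
  have hC := (((hasDerivAt_id u).sub_const w).one_div_pow h.sub_ne_zero c)
  refine ((hA.fun_mul (hasDerivAt_pow b u)).fun_mul hC).congr_deriv ?_
  rw [eq_div_iff h.1]
  rcases b with _ | b <;>
    simp only [monomial, id_eq, Nat.cast_zero, Nat.cast_succ, Nat.add_sub_cancel, zero_mul,
      zero_add] <;>
    ring

noncomputable def step (F : ℂ → ℂ → ℂ) (u w : ℂ) : ℂ :=
  2 * (1 + 1 / u ^ 2)⁻¹ * (F u w / u + deriv (fun z => F z w) u)

theorem step_monomial (a b c : ℕ) {u w : ℂ} (h : Regular u w) :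
    step (monomial a b c) u w = 2 * ((b + 1) * monomial (a + 1) (b + 1) c u w
      - 2 * a * monomial (a + 2) (b + 3) c u w - c * monomial (a + 1) (b + 2) (c + 1) u w) := by
  rw [step, (hasDerivAt_monomial a b c h).deriv]
  have h₀ := h.1
  have h₁ := h.one_add_sq_ne_zero
  simp only [monomial]
  field_simp
  ring

theorem step_congr {F G : ℂ → ℂ → ℂ} (hFG : ∀ u w, Regular u w → F u w = G u w) {u w : ℂ}
    (h : Regular u w) : step F u w = step G u w := by
  have hev : (fun z => F z w) =ᶠ[𝓝 u] fun z => G z w :=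
    h.eventually.mono fun z hz => hFG z w hz
  rw [step, step, hFG u w h, hev.deriv_eq]

theorem step_sum {ι : Type*} (s : Finset ι) (c : ι → ℂ) (F : ι → ℂ → ℂ → ℂ) {u w : ℂ}
    (hF : ∀ k ∈ s, DifferentiableAt ℂ (fun z => F k z w) u) :
    step (fun u w => ∑ k ∈ s, c k * F k u w) u w = ∑ k ∈ s, c k * step (F k) u w := by
  simp only [step]
  rw [deriv_fun_sum fun k hk => (hF k hk).const_mul (c k), sum_div, ← sum_add_distrib,
    mul_sum]
  refine sum_congr rfl fun k _ => ?_
  rw [deriv_const_mul_field']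
  ring

noncomputable def basis (p i j : ℕ) : ℂ → ℂ → ℂ :=
  monomial (p + i) (2 * p + i - j) (p + 1 - i - j)

def triangle (p : ℕ) : Finset ((_ : ℕ) × ℕ) :=
  (range p).sigma fun i => range (p - i + 1)

theorem mem_triangle {p i j : ℕ} : ⟨i, j⟩ ∈ triangle p ↔ i < p ∧ j ≤ p - i := by
  simp [triangle]

def closedForms (p : ℕ) : Submodule ℂ (ℂ → ℂ → ℂ) where
  carrier := {F | ∃ q : ℕ → ℕ → ℂ, ∀ u w, Regular u w →
    F u w = ∑ k ∈ triangle p, q k.1 k.2 * basis p k.1 k.2 u w}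
  zero_mem' := ⟨0, by simp⟩
  add_mem' := by
    rintro F G ⟨q, hq⟩ ⟨r, hr⟩
    refine ⟨q + r, fun u w h => ?_⟩
    simp [hq u w h, hr u w h, add_mul, sum_add_distrib]
  smul_mem' := by
    rintro c F ⟨q, hq⟩
    refine ⟨c • q, fun u w h => ?_⟩
    simp [hq u w h, mul_sum, mul_assoc]

theorem mem_closedForms_of_eq {p : ℕ} {F G : ℂ → ℂ → ℂ} (hG : G ∈ closedForms p)
    (hFG : ∀ u w, Regular u w → F u w = G u w) : F ∈ closedForms p := by
  obtain ⟨q, hq⟩ := hG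
  exact ⟨q, fun u w h => (hFG u w h).trans (hq u w h)⟩

theorem basis_mem_closedForms {p i j : ℕ} (hi : i < p) (hj : j ≤ p - i) :
    basis p i j ∈ closedForms p := by
  refine ⟨fun i' j' => if i' = i ∧ j' = j then 1 else 0, fun u w _ => ?_⟩
  rw [sum_eq_single ⟨i, j⟩]
  · simp
  · rintro ⟨i', j'⟩ _ hne
    simp_all
  · exact fun h => absurd (mem_triangle.mpr ⟨hi, hj⟩) h

theorem step_basis {p i j : ℕ} (hij : i + j ≤ p) {u w : ℂ} (h : Regular u w) :
    step (basis p i j) u w = 2 * (((2 * p + i - j : ℕ) + 1) * basis (p + 1) i (j + 1) u w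
      - 2 * (p + i : ℕ) * basis (p + 1) (i + 1) j u w
      - (p + 1 - i - j : ℕ) * basis (p + 1) i j u w) := by
  have e₁ : basis (p + 1) i (j + 1) =
      monomial (p + i + 1) (2 * p + i - j + 1) (p + 1 - i - j) := by
    unfold basis; congr 1 <;> omega
  have e₂ : basis (p + 1) (i + 1) j =
      monomial (p + i + 2) (2 * p + i - j + 3) (p + 1 - i - j) := by
    unfold basis; congr 1 <;> omega
  have e₃ : basis (p + 1) i j =
      monomial (p + i + 1) (2 * p + i - j + 2) (p + 1 - i - j + 1) := by
    unfold basis; congr 1 <;> omega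
  rw [e₁, e₂, e₃, basis, step_monomial _ _ _ h]

theorem step_basis_mem {p i j : ℕ} (hi : i < p ∨ p = 0) (hij : i + j ≤ p) :
    step (basis p i j) ∈ closedForms (p + 1) := by
  have h₁ : basis (p + 1) i (j + 1) ∈ closedForms (p + 1) :=
    basis_mem_closedForms (by omega) (by omega)
  -- for `p = 0` the term `basis 1 1 0`, outside the triangle, comes with the factor `p + i = 0`
  have h₂ : (2 * (p + i : ℕ) : ℂ) • basis (p + 1) (i + 1) j ∈ closedForms (p + 1) := by
    rcases hi with hi | rfl
    · exact Submodule.smul_mem _ _ (basis_mem_closedForms (by omega) (by omega))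
    · obtain rfl : i = 0 := by omega
      simp
  have h₃ : basis (p + 1) i j ∈ closedForms (p + 1) :=
    basis_mem_closedForms (by omega) (by omega)
  refine mem_closedForms_of_eq
    (G := (2 : ℂ) • (((2 * p + i - j : ℕ) + 1 : ℂ) • basis (p + 1) i (j + 1)
      - (2 * (p + i : ℕ) : ℂ) • basis (p + 1) (i + 1) j
      - ((p + 1 - i - j : ℕ) : ℂ) • basis (p + 1) i j))
    (Submodule.smul_mem _ _ (Submodule.sub_mem _ (Submodule.sub_mem _
      (Submodule.smul_mem _ _ h₁) h₂) (Submodule.smul_mem _ _ h₃))) fun u w h => ?_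
  rw [step_basis hij h]
  simp only [Pi.smul_apply, Pi.sub_apply, smul_eq_mul]

theorem differentiableAt_basis (p i j : ℕ) {u w : ℂ} (h : Regular u w) :
    DifferentiableAt ℂ (fun z => basis p i j z w) u :=
  (hasDerivAt_monomial _ _ _ h).differentiableAt

theorem step_mem {p : ℕ} {F : ℂ → ℂ → ℂ} (hF : F ∈ closedForms p) :
    step F ∈ closedForms (p + 1) := by
  obtain ⟨q, hq⟩ := hF
  refine mem_closedForms_of_eq (G := ∑ k ∈ triangle p, q k.1 k.2 • step (basis p k.1 k.2))
    (Submodule.sum_mem _ fun ⟨i, j⟩ hk => by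
      obtain ⟨hi, hj⟩ := mem_triangle.mp hk
      exact Submodule.smul_mem _ _ (step_basis_mem (i := i) (j := j) (.inl hi) (by omega)))
    fun u w h => ?_
  rw [step_congr hq h, step_sum _ _ _ fun k _ => differentiableAt_basis _ _ _ h]
  simp only [Finset.sum_apply, Pi.smul_apply, smul_eq_mul]

theorem iterate_step_mem_closedForms {p : ℕ} (hp : 1 ≤ p) :
    step^[p] (basis 0 0 0) ∈ closedForms p := by
  induction p, hp using Nat.le_induction with
  | base => exact step_basis_mem (.inr rfl) le_rfl
  | succ p _ ih => rw [Function.iterate_succ_apply']; exact step_mem ih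

theorem eq_iterate_step (m : ℝ) (p : ℕ) (u w : ℂ) :
    Qfun m p u w = (1 / (2 * m : ℂ)) ^ p * step^[p] (basis 0 0 0) u w := by
  induction p generalizing u w with
  | zero => simp [Qfun, basis, monomial]
  | succ p ih =>
    simp only [Qfun, ih, deriv_const_mul_field', Function.iterate_succ_apply', step]
    ring

end Qfun

/-- Closed form for `Q_p`, `p ≥ 1`: there exist constants `q_{p,i,j}`
`(0 ≤ i ≤ p-1, 0 ≤ j ≤ p-i)`, independent of `m`, `u` and `w`, such that
`Q_p(u,w) = (2m)^{-p} ∑ᵢ∑ⱼ q_{p,i,j} (1/(1+u²))^{p+i} u^{2p+i-j} (1/(u-w))^{p+1-i-j}`. -/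
theorem Qfun_closed_form (p : ℕ) (hp : 1 ≤ p) :
    ∃ q : ℕ → ℕ → ℂ, ∀ (m : ℝ), m ≠ 0 → ∀ u w : ℂ,
      u ≠ 0 → u ≠ Complex.I → u ≠ -Complex.I → w ≠ u →
      Qfun m p u w = (1 / (2 * (m : ℂ)) ^ p) *
        ∑ i ∈ Finset.range p, ∑ j ∈ Finset.range (p - i + 1),
          q i j * (1 / (1 + u ^ 2)) ^ (p + i) * u ^ (2 * p + i - j) *
            (1 / (u - w)) ^ (p + 1 - i - j) := by
  obtain ⟨q, hq⟩ := Qfun.iterate_step_mem_closedForms hp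
  refine ⟨q, fun m _ u w hu hI hnI hw => ?_⟩
  rw [Qfun.eq_iterate_step, hq u w ⟨hu, hI, hnI, hw⟩, Qfun.triangle, Finset.sum_sigma,
    one_div_pow]
  simp only [Qfun.basis, Qfun.monomial, mul_assoc]
end

section
/- Fix a natural number k and a real constant M>0. For a natural number N, a natural number n with n\le N, and a real number x, define \varphi_k(N) = \frac{(-n)_k(-x)_k(n+1)_k}{(-N+1)_k\,(k!)^2}, where (y)_k = y(y+1)\cdots(y+k-1) is the Pochhammer symbol. Let (n_N) and (x_N) be sequences with n_N a natural number, k+1 \le n_N \le N, x_N real with 0 < x_N \le M and x_N \notin \{0,1,\dots,k\}, and suppose n_N^2/(x_N\,N) \to 0 as N\to\infty. Then for all N large enough \varphi_k(N)\ne 0, and \varphi_{k+1}(N)/\varphi_k(N) \to 0 as N\to\infty; that is, (\varphi_k(N))_k is an asymptotic sequence in this regime. -/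
open Filter

noncomputable def poch (y : ℝ) (k : ℕ) : ℝ := (ascPochhammer ℝ k).eval y

noncomputable def phiTerm (k n N : ℕ) (x : ℝ) : ℝ :=
  poch (-(n : ℝ)) k * poch (-x) k * poch ((n : ℝ) + 1) k /
    (poch (-(N : ℝ) + 1) k * ((k.factorial : ℝ)) ^ 2)

lemma poch_succ (y : ℝ) (k : ℕ) : poch y (k+1) = poch y k * (y + k) := by
  simp [poch, ascPochhammer_succ_right]

lemma poch_ne_zero {y : ℝ} {k : ℕ} (h : ∀ i < k, y + i ≠ 0) : poch y k ≠ 0 := by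
  induction k with
  | zero => simp [poch]
  | succ m ih =>
    rw [poch_succ]
    exact mul_ne_zero (ih fun i hi => h i (by omega)) (h m (by omega))

lemma ratio_alg (A B C D F a b c d e : ℝ) (hA : A ≠ 0) (hB : B ≠ 0) (hC : C ≠ 0)
    (hD : D ≠ 0) (hF : F ≠ 0) (hd : d ≠ 0) (he : e ≠ 0) :
    (A*a * (B*b) * (C*c) / (D*d * (e*F))) / (A*B*C / (D*F)) = a*b*c/(d*e) := by
  field_simp

/-- In the regime `n² / (x N) → 0` with `x` bounded and bounded away from
nonnegative integers `≤ k`, the terms `φₖ(N)` form an asymptotic sequence: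
eventually `φₖ(N) ≠ 0` and `φ_{k+1}(N)/φₖ(N) → 0`. -/
theorem phiTerm_asymptotic_sequence (k : ℕ) (M : ℝ) (hM : 0 < M)
    (n : ℕ → ℕ) (x : ℕ → ℝ)
    (hn : ∀ N, k + 1 ≤ N → k + 1 ≤ n N ∧ n N ≤ N)
    (hx : ∀ N, 0 < x N ∧ x N ≤ M)
    (hxint : ∀ N, ∀ i : ℕ, i ≤ k → x N ≠ i)
    (hlim : Tendsto (fun N : ℕ => (n N : ℝ) ^ 2 / (x N * N)) atTop (nhds 0)) :
    (∀ᶠ N in atTop, phiTerm k (n N) N (x N) ≠ 0) ∧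
    Tendsto (fun N : ℕ => phiTerm (k + 1) (n N) N (x N) / phiTerm k (n N) N (x N))
      atTop (nhds 0) := by
  have hk0 : (0:ℝ) ≤ k := Nat.cast_nonneg k
  -- nonzeroness of the four pochhammer factors at level k, for N ≥ k+1
  have hA : ∀ N, k + 1 ≤ N → poch (-(n N : ℝ)) k ≠ 0 := by
    intro N hN
    refine poch_ne_zero fun i hi hz => ?_
    have h1 := (hn N hN).1
    have : (i:ℝ) = (n N : ℝ) := by linarith
    have : i = n N := Nat.cast_injective this
    omega
  have hB : ∀ N, poch (-(x N)) k ≠ 0 := by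
    intro N
    refine poch_ne_zero fun i hi hz => ?_
    exact hxint N i (by omega) (by linarith)
  have hC : ∀ N, poch ((n N : ℝ) + 1) k ≠ 0 := by
    intro N
    refine poch_ne_zero fun i hi hz => ?_
    have : (0:ℝ) ≤ (n N : ℝ) := Nat.cast_nonneg _
    have : (0:ℝ) ≤ (i : ℝ) := Nat.cast_nonneg _
    linarith
  have hD : ∀ N, k + 1 ≤ N → poch (-(N : ℝ) + 1) k ≠ 0 := by
    intro N hN
    refine poch_ne_zero fun i hi hz => ?_
    have : (N:ℝ) = (i:ℝ) + 1 := by linarith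
    have : N = i + 1 := by exact_mod_cast this
    omega
  have hF : ((k.factorial : ℝ)) ^ 2 ≠ 0 :=
    pow_ne_zero _ (Nat.cast_ne_zero.mpr k.factorial_ne_zero)
  have hne : ∀ N, k + 1 ≤ N → phiTerm k (n N) N (x N) ≠ 0 := by
    intro N hN
    exact div_ne_zero (mul_ne_zero (mul_ne_zero (hA N hN) (hB N)) (hC N))
      (mul_ne_zero (hD N hN) hF)
  -- ratio formula for N ≥ 2k+2
  have hratio : ∀ N, 2*k + 2 ≤ N →
      phiTerm (k + 1) (n N) N (x N) / phiTerm k (n N) N (x N) =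
      ((-(n N : ℝ) + k) * (-(x N) + k) * ((n N : ℝ) + 1 + k)) /
        ((-(N : ℝ) + 1 + k) * ((k:ℝ) + 1)^2) := by
    intro N hN
    have hN1 : k + 1 ≤ N := by omega
    have hNk : (-(N:ℝ) + 1 + k) ≠ 0 := by
      intro hz
      have : (N:ℝ) = (k:ℝ) + 1 := by linarith
      have : N = k + 1 := by exact_mod_cast this
      omega
    have he : ((k:ℝ) + 1)^2 ≠ 0 := by positivity
    have expand : phiTerm (k+1) (n N) N (x N) =
        poch (-(n N:ℝ)) k * (-(n N:ℝ) + k) * (poch (-(x N)) k * (-(x N) + k)) *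
        (poch ((n N:ℝ)+1) k * ((n N:ℝ) + 1 + k)) /
        (poch (-(N:ℝ)+1) k * (-(N:ℝ) + 1 + k) *
          (((k:ℝ)+1)^2 * ((k.factorial : ℝ))^2)) := by
      unfold phiTerm
      rw [poch_succ, poch_succ, poch_succ, poch_succ, Nat.factorial_succ]
      push_cast
      ring
    rw [expand]
    show _ / (poch (-(n N:ℝ)) k * poch (-(x N)) k * poch ((n N:ℝ)+1) k /
        (poch (-(N:ℝ)+1) k * ((k.factorial : ℝ))^2)) = _
    exact ratio_alg _ _ _ _ _ _ _ _ _ _ (hA N hN1) (hB N) (hC N) (hD N hN1) hF hNk he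
  -- (n N)^2 / N → 0
  have h0 : Tendsto (fun N : ℕ => (n N : ℝ)^2 / N) atTop (nhds 0) := by
    apply squeeze_zero' (g := fun N : ℕ => M * ((n N : ℝ)^2 / (x N * N)))
    · filter_upwards with N
      positivity
    · filter_upwards [eventually_ge_atTop 1] with N hN
      have hxN := hx N
      have hNpos : (0:ℝ) < N := by exact_mod_cast hN
      have key : x N * ((n N : ℝ)^2 / (x N * N)) = (n N : ℝ)^2 / N := by
        rw [mul_div_assoc']
        rw [mul_div_mul_left _ _ (ne_of_gt hxN.1)]
      rw [← key]
      have ht : (0:ℝ) ≤ (n N : ℝ)^2 / (x N * N) :=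
        div_nonneg (sq_nonneg _) (le_of_lt (mul_pos hxN.1 hNpos))
      exact mul_le_mul_of_nonneg_right hxN.2 ht
    · have := hlim.const_mul M
      simpa using this
  set C : ℝ := 4 * (M + k) / ((k:ℝ) + 1)^2 with hC_def
  have hCt : Tendsto (fun N : ℕ => C * ((n N : ℝ)^2 / N)) atTop (nhds 0) := by
    have := h0.const_mul C
    simpa using this
  have hg : Tendsto (fun N : ℕ =>
      ((-(n N : ℝ) + k) * (-(x N) + k) * ((n N : ℝ) + 1 + k)) /
        ((-(N : ℝ) + 1 + k) * ((k:ℝ) + 1)^2)) atTop (nhds 0) := by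
    apply squeeze_zero_norm' _ hCt
    filter_upwards [eventually_ge_atTop (2*k+2)] with N hN
    have hN1 : k + 1 ≤ N := by omega
    have hnN := hn N hN1
    have hxN := hx N
    have hNr : (2:ℝ)*k + 2 ≤ N := by exact_mod_cast hN
    have hnr : (k:ℝ) + 1 ≤ (n N : ℝ) := by exact_mod_cast hnN.1
    have hNpos : (0:ℝ) < N := by linarith
    rw [Real.norm_eq_abs, abs_div, abs_mul, abs_mul, abs_mul]
    have e1 : |(-(n N : ℝ) + k)| ≤ (n N : ℝ) := by
      rw [abs_le]; constructor <;> linarith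
    have e2 : |(-(x N) + k)| ≤ M + k := by
      rw [abs_le]; constructor <;> [linarith [hxN.2]; linarith [hxN.1]]
    have e3 : |((n N : ℝ) + 1 + k)| ≤ 2 * (n N : ℝ) := by
      rw [abs_le]; constructor <;> linarith
    have ed : (N:ℝ)/2 * ((k:ℝ)+1)^2 ≤ |(-(N : ℝ) + 1 + k)| * |((k:ℝ) + 1)^2| := by
      have : |(-(N : ℝ) + 1 + k)| = (N:ℝ) - 1 - k := by
        rw [abs_of_nonpos (by linarith)]; ring
      rw [this, abs_of_nonneg (by positivity)]
      have : (N:ℝ)/2 ≤ (N:ℝ) - 1 - k := by linarith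
      nlinarith [sq_nonneg ((k:ℝ)+1)]
    have hnum : |(-(n N : ℝ) + k)| * |(-(x N) + k)| * |((n N : ℝ) + 1 + k)| ≤
        (n N : ℝ) * (M + k) * (2 * (n N : ℝ)) := by
      have h1 : |(-(n N : ℝ) + k)| * |(-(x N) + k)| ≤ (n N : ℝ) * (M + k) := by
        apply mul_le_mul e1 e2 (abs_nonneg _) (by positivity)
      apply mul_le_mul h1 e3 (abs_nonneg _) (by positivity)
    have hdpos : (0:ℝ) < (N:ℝ)/2 * ((k:ℝ)+1)^2 := by positivity
    have hle : |(-(n N : ℝ) + k)| * |(-(x N) + k)| * |((n N : ℝ) + 1 + k)| /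
        (|(-(N : ℝ) + 1 + k)| * |((k:ℝ) + 1)^2|) ≤
        (n N : ℝ) * (M + k) * (2 * (n N : ℝ)) / ((N:ℝ)/2 * ((k:ℝ)+1)^2) :=
      div_le_div₀ (by positivity) hnum hdpos ed
    refine hle.trans (le_of_eq ?_)
    rw [hC_def]
    have hk1 : ((k:ℝ) + 1) ≠ 0 := by positivity
    field_simp
    ring
  refine ⟨?_, ?_⟩
  · filter_upwards [eventually_ge_atTop (k+1)] with N hN using hne N hN
  · apply hg.congr'
    filter_upwards [eventually_ge_atTop (2*k+2)] with N hN
    exact (hratio N hN).symm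
end
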